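/- arXiv:2311.15910 — 2 statements merged into one kernel-verified Lean document; each statement's English description precedes it below -/
import Mathlib

section
/- Let n ≥ 2 be an integer, K a field, R_n the rose graph with n petals, and u a unit of L_K(R_n). Then f_u is an automorphism of L_K(R_n) if and only if u^{-1} = f_u(w) for some unit w of L_K(R_n); in this case f_u^{-1} = f_w. Consequently, the group of graded automorphisms satisfies Aut^{gr}(L_K(R_n)) = { f_u ∈ Aut(L_K(R_n)) : u is a unit of the degree-zero component L_K(R_n)_0 }. -/
/-- Generators of the Leavitt path algebra of the rose with `n` petals:
the edges `e_1, …, e_n` and the ghost edges `e_1*, …, e_n*` (the single vertex `v` is the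
identity `1`). -/
inductive RGen (n : ℕ) : Type
  | e : Fin n → RGen n
  | g : Fin n → RGen n

/-- The defining relations of `L_K(R_n)`: `e_i* e_j = δ_{ij} v` and `Σ_i e_i e_i* = v`,
where `v = 1`. -/
inductive RoseRel (K : Type) [Field K] (n : ℕ) :
    FreeAlgebra K (RGen n) → FreeAlgebra K (RGen n) → Prop
  | ghostEdgeSame (i : Fin n) :
      RoseRel K n (FreeAlgebra.ι K (RGen.g i) * FreeAlgebra.ι K (RGen.e i)) 1
  | ghostEdgeNe (i j : Fin n) (h : i ≠ j) :
      RoseRel K n (FreeAlgebra.ι K (RGen.g i) * FreeAlgebra.ι K (RGen.e j)) 0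
  | ck2 :
      RoseRel K n (∑ i : Fin n, FreeAlgebra.ι K (RGen.e i) * FreeAlgebra.ι K (RGen.g i)) 1

/-- The Leavitt path algebra `L_K(R_n)` of the rose with `n` petals. -/
abbrev LRose (K : Type) [Field K] (n : ℕ) : Type := RingQuot (RoseRel K n)

/-- The edge `e_i` as an element of `L_K(R_n)`. -/
noncomputable def ee (K : Type) [Field K] (n : ℕ) (i : Fin n) : LRose K n :=
  RingQuot.mkAlgHom K (RoseRel K n) (FreeAlgebra.ι K (RGen.e i))

/-- The ghost edge `e_i*` as an element of `L_K(R_n)`. -/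
noncomputable def gg (K : Type) [Field K] (n : ℕ) (i : Fin n) : LRose K n :=
  RingQuot.mkAlgHom K (RoseRel K n) (FreeAlgebra.ι K (RGen.g i))

/-- The degree `d` component of the ℤ-grading of `L_K(R_n)`: the `K`-span of the
elements `p q*` with `|p| - |q| = d`. -/
noncomputable def rComponent (K : Type) [Field K] (n : ℕ) (d : ℤ) :
    Submodule K (LRose K n) :=
  Submodule.span K {x : LRose K n | ∃ p q : List (Fin n),
    (p.length : ℤ) - (q.length : ℤ) = d ∧
    x = (p.map (ee K n)).prod * (q.reverse.map (gg K n)).prod}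

/-- A map is graded when it preserves every homogeneous component. -/
def RGraded (K : Type) [Field K] (n : ℕ) (f : LRose K n → LRose K n) : Prop :=
  ∀ d : ℤ, ∀ x ∈ rComponent K n d, f x ∈ rComponent K n d

/-- The defining property of the endomorphism `φ_P` of `L_K(R_n)` attached to a matrix
`P` with inverse `P'`: it sends `e_i ↦ Σ_k e_k p_{k i}` and `e_i* ↦ Σ_k p'_{i k} e_k*`
(and `v = 1 ↦ 1` automatically). -/
def RPhiProps (K : Type) [Field K] (n : ℕ) (P P' : Matrix (Fin n) (Fin n) (LRose K n))
    (φ : LRose K n →ₐ[K] LRose K n) : Prop :=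
  (∀ i, φ (ee K n i) = ∑ k, ee K n k * P k i) ∧
  (∀ i, φ (gg K n i) = ∑ k, P' i k * gg K n k)

/-!
The relations say that `(e_i, e_i*)` is a Cuntz family, so for any endomorphism `φ` the pair
`(φ e_i, φ e_i*)` is one too, and `a = ∑ φ(e_k) e_k*` is a unit with `φ = f_a`; when `φ` is graded,
`a` has degree `1 + (-1) = 0`, and conversely `f_a` with `a` of degree `0` preserves degrees.

For `n ≥ 2` a nonzero `x` satisfies `a x b = 1` for some `a, b`, so every endomorphism is
injective. If `u⁻¹ = f_u(w)`, then `f_u ∘ f_w` fixes the generators, hence is the identity; so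
`f_u` is onto, and injectivity turns `f_u (f_w (f_u x)) = f_u x` into `f_w ∘ f_u = id`.
Conversely, if `f_u` is bijective, take `w = f_u⁻¹(u⁻¹)`.
-/

structure IsCuntzFamily {A ι : Type*} [Ring A] [Fintype ι] [DecidableEq ι] (E G : ι → A) :
    Prop where
  ghost_mul_edge : ∀ i j, G i * E j = if i = j then 1 else 0
  sum_edge_mul_ghost : ∑ i, E i * G i = 1

namespace IsCuntzFamily

variable {A ι : Type*} [Ring A] [Fintype ι] [DecidableEq ι] {E G E' G' : ι → A}

theorem map {B : Type*} [Ring B] (f : A →+* B) (h : IsCuntzFamily E G) :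
    IsCuntzFamily (fun i => f (E i)) (fun i => f (G i)) where
  ghost_mul_edge i j := by rw [← map_mul, h.ghost_mul_edge, apply_ite f, map_one, map_zero]
  sum_edge_mul_ghost := by simp_rw [← map_mul, ← map_sum, h.sum_edge_mul_ghost, map_one]

theorem conj (h : IsCuntzFamily E G) {w w' : A} (hww' : w * w' = 1) (hw'w : w' * w = 1) :
    IsCuntzFamily (fun i => w * E i) (fun i => G i * w') where
  ghost_mul_edge i j := by
    rw [mul_assoc, ← mul_assoc w', hw'w, one_mul, h.ghost_mul_edge]
  sum_edge_mul_ghost := by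
    simp_rw [mul_assoc, ← mul_assoc (E _), ← Finset.mul_sum, ← Finset.sum_mul,
      h.sum_edge_mul_ghost, one_mul, hww']

theorem sum_mul_ghost_mul_edge (h : IsCuntzFamily E G) (x : ι → A) (i : ι) :
    (∑ k, x k * G k) * E i = x i := by
  simp [Finset.sum_mul, mul_assoc, h.ghost_mul_edge]

theorem ghost_mul_sum_edge_mul (h : IsCuntzFamily E G) (x : ι → A) (i : ι) :
    G i * ∑ k, E k * x k = x i := by
  simp [Finset.mul_sum, ← mul_assoc, h.ghost_mul_edge]

theorem sum_mul_sum_eq_one (h : IsCuntzFamily E G) (h' : IsCuntzFamily E' G') :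
    (∑ k, E' k * G k) * ∑ k, E k * G' k = 1 := by
  simp_rw [Finset.sum_mul, mul_assoc, h.ghost_mul_sum_edge_mul, h'.sum_edge_mul_ghost]

end IsCuntzFamily

section Rose

variable {K : Type} [Field K] {n : ℕ}

theorem isCuntzFamily_ee_gg : IsCuntzFamily (ee K n) (gg K n) where
  ghost_mul_edge i j := by
    simp only [gg, ee, ← map_mul]
    split_ifs with h
    · subst h
      rw [RingQuot.mkAlgHom_rel K (RoseRel.ghostEdgeSame i), map_one]
    · rw [RingQuot.mkAlgHom_rel K (RoseRel.ghostEdgeNe i j h), map_zero]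
  sum_edge_mul_ghost := by
    simp only [gg, ee, ← map_mul, ← map_sum]
    rw [RingQuot.mkAlgHom_rel K RoseRel.ck2, map_one]

theorem gg_mul_ee (i j : Fin n) : gg K n i * ee K n j = if i = j then 1 else 0 :=
  isCuntzFamily_ee_gg.ghost_mul_edge i j

namespace LRose

variable {A : Type*} [Ring A] [Algebra K A] {E G : Fin n → A}

noncomputable def lift (h : IsCuntzFamily E G) : LRose K n →ₐ[K] A :=
  RingQuot.liftAlgHom K ⟨FreeAlgebra.lift K fun | .e i => E i | .g i => G i, by
    intro x y hxy
    induction hxy with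
    | ghostEdgeSame i => simpa using h.ghost_mul_edge i i
    | ghostEdgeNe i j hij => simpa [hij] using h.ghost_mul_edge i j
    | ck2 => simpa using h.sum_edge_mul_ghost⟩

@[simp]
theorem lift_ee (h : IsCuntzFamily E G) (i : Fin n) : lift (K := K) h (ee K n i) = E i := by
  simp [lift, ee]

@[simp]
theorem lift_gg (h : IsCuntzFamily E G) (i : Fin n) : lift (K := K) h (gg K n i) = G i := by
  simp [lift, gg]

theorem algHom_ext {f g : LRose K n →ₐ[K] A} (he : ∀ i, f (ee K n i) = g (ee K n i))
    (hg : ∀ i, f (gg K n i) = g (gg K n i)) : f = g := by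
  refine RingQuot.ringQuot_ext' K f g (FreeAlgebra.hom_ext (funext fun x => ?_))
  cases x with
  | e i => exact he i
  | g i => exact hg i

end LRose

end Rose

section Paths

variable (K : Type) [Field K] (n : ℕ)

noncomputable def eePath (p : List (Fin n)) : LRose K n := (p.map (ee K n)).prod

noncomputable def ggPath (q : List (Fin n)) : LRose K n := (q.reverse.map (gg K n)).prod

noncomputable def rMonomial (pq : List (Fin n) × List (Fin n)) : LRose K n :=
  eePath K n pq.1 * ggPath K n pq.2

variable {K n}

@[simp] theorem eePath_nil : eePath K n [] = 1 := rfl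

@[simp] theorem ggPath_nil : ggPath K n [] = 1 := rfl

theorem eePath_cons (i : Fin n) (p : List (Fin n)) :
    eePath K n (i :: p) = ee K n i * eePath K n p := by
  simp [eePath]

theorem ggPath_cons (i : Fin n) (q : List (Fin n)) :
    ggPath K n (i :: q) = ggPath K n q * gg K n i := by
  simp [ggPath]

theorem eePath_append (p r : List (Fin n)) :
    eePath K n (p ++ r) = eePath K n p * eePath K n r := by
  simp [eePath]

theorem ggPath_append (q s : List (Fin n)) :
    ggPath K n (q ++ s) = ggPath K n s * ggPath K n q := by
  simp [ggPath]

theorem ggPath_mul_eePath (q r : List (Fin n)) :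
    ggPath K n q * eePath K n r =
      if q <+: r then eePath K n (r.drop q.length)
      else if r <+: q then ggPath K n (q.drop r.length) else 0 := by
  induction q generalizing r with
  | nil => simp
  | cons i q ih =>
    cases r with
    | nil => simp [ggPath_cons]
    | cons j r =>
      rw [ggPath_cons, eePath_cons, mul_assoc, ← mul_assoc (gg K n i), gg_mul_ee]
      by_cases hij : i = j
      · subst hij
        simp [ih]
      · simp [hij, Ne.symm hij]

theorem ggPath_mul_eePath_self (p : List (Fin n)) : ggPath K n p * eePath K n p = 1 := by
  simp [ggPath_mul_eePath]

end Paths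

section Grading

variable {K : Type} [Field K] {n : ℕ}

theorem monomial_mem_rComponent (p q : List (Fin n)) :
    eePath K n p * ggPath K n q ∈ rComponent K n ((p.length : ℤ) - q.length) :=
  Submodule.subset_span ⟨p, q, rfl, rfl⟩

theorem one_mem_rComponent : (1 : LRose K n) ∈ rComponent K n 0 := by
  simpa using monomial_mem_rComponent (K := K) (n := n) [] []

theorem ee_mem_rComponent (i : Fin n) : ee K n i ∈ rComponent K n 1 := by
  simpa [eePath_cons] using monomial_mem_rComponent (K := K) [i] []

theorem gg_mem_rComponent (i : Fin n) : gg K n i ∈ rComponent K n (-1) := by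
  simpa [ggPath_cons] using monomial_mem_rComponent (K := K) [] [i]

theorem monomial_mul_monomial_mem_rComponent (p q r s : List (Fin n)) :
    eePath K n p * ggPath K n q * (eePath K n r * ggPath K n s) ∈
      rComponent K n (((p.length : ℤ) - q.length) + ((r.length : ℤ) - s.length)) := by
  rw [mul_assoc, ← mul_assoc (ggPath K n q), ggPath_mul_eePath]
  split_ifs with hqr hrq
  · have := hqr.length_le
    rw [← mul_assoc, ← eePath_append]
    convert monomial_mem_rComponent (K := K) (p ++ r.drop q.length) s using 2
    simp only [List.length_append, List.length_drop]
    omega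
  · have := hrq.length_le
    rw [← ggPath_append]
    convert monomial_mem_rComponent (K := K) p (s ++ q.drop r.length) using 2
    simp only [List.length_append, List.length_drop]
    omega
  · rw [zero_mul, mul_zero]
    exact zero_mem _

theorem rComponent_mul_le (d e : ℤ) :
    rComponent K n d * rComponent K n e ≤ rComponent K n (d + e) := by
  rw [rComponent, rComponent, Submodule.span_mul_span, Submodule.span_le]
  rintro _ ⟨_, ⟨p, q, rfl, rfl⟩, _, ⟨r, s, rfl, rfl⟩, rfl⟩
  exact monomial_mul_monomial_mem_rComponent p q r s

theorem mul_mem_rComponent {d e : ℤ} {x y : LRose K n} (hx : x ∈ rComponent K n d)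
    (hy : y ∈ rComponent K n e) : x * y ∈ rComponent K n (d + e) :=
  rComponent_mul_le d e (Submodule.mul_mem_mul hx hy)

theorem mem_span_range_rMonomial (x : LRose K n) :
    x ∈ Submodule.span K (Set.range (rMonomial K n)) := by
  set S := Submodule.span K (Set.range (rMonomial K n))
  have hS : ∀ d, rComponent K n d ≤ S := fun d =>
    Submodule.span_mono (by rintro _ ⟨p, q, -, rfl⟩; exact ⟨(p, q), rfl⟩)
  have hmul : ∀ {y z}, y ∈ S → z ∈ S → y * z ∈ S := by
    suffices S * S ≤ S from fun {_ _} hy hz => this (Submodule.mul_mem_mul hy hz)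
    rw [Submodule.span_mul_span, Submodule.span_le]
    rintro _ ⟨_, ⟨⟨p, q⟩, rfl⟩, _, ⟨⟨r, s⟩, rfl⟩, rfl⟩
    exact hS _ (monomial_mul_monomial_mem_rComponent p q r s)
  obtain ⟨y, rfl⟩ := RingQuot.mkAlgHom_surjective K (RoseRel K n) x
  induction y using FreeAlgebra.induction with
  | grade0 r =>
    rw [AlgHom.commutes, Algebra.algebraMap_eq_smul_one]
    exact Submodule.smul_mem _ _ (hS 0 one_mem_rComponent)
  | grade1 x =>
    cases x with
    | e i => exact hS 1 (ee_mem_rComponent i)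
    | g i => exact hS (-1) (gg_mem_rComponent i)
  | mul a b ha hb => rw [map_mul]; exact hmul ha hb
  | add a b ha hb => rw [map_add]; exact add_mem ha hb

theorem rGraded_of_map_mem_rComponent (φ : LRose K n →ₐ[K] LRose K n)
    (he : ∀ i, φ (ee K n i) ∈ rComponent K n 1) (hg : ∀ i, φ (gg K n i) ∈ rComponent K n (-1)) :
    RGraded K n φ := by
  have hpath : ∀ p, φ (eePath K n p) ∈ rComponent K n (p.length : ℤ) := by
    intro p
    induction p with
    | nil => simpa using one_mem_rComponent
    | cons i p ih =>
      rw [eePath_cons, map_mul]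
      convert mul_mem_rComponent (he i) ih using 2
      simp [add_comm]
  have hghost : ∀ q, φ (ggPath K n q) ∈ rComponent K n (-(q.length : ℤ)) := by
    intro q
    induction q with
    | nil => simpa using one_mem_rComponent
    | cons i q ih =>
      rw [ggPath_cons, map_mul]
      convert mul_mem_rComponent ih (hg i) using 2
      simp; ring
  intro d x hx
  refine (Submodule.span_le (p := (rComponent K n d).comap φ.toLinearMap)).mpr ?_ hx
  rintro _ ⟨p, q, rfl, rfl⟩
  show φ (eePath K n p * ggPath K n q) ∈ rComponent K n _
  rw [map_mul, sub_eq_add_neg]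
  exact mul_mem_rComponent (hpath p) (hghost q)

end Grading

theorem eq_of_append_marker_prefix {α : Type*} {z o : α} (hoz : o ≠ z) {N : ℕ} {p₀ p : List α}
    (hle : p₀.length ≤ p.length) (hN : p.length ≤ N)
    (h : p₀ ++ (List.replicate N z ++ [o]) <+: p ++ (List.replicate N z ++ [o])) : p₀ = p := by
  obtain ⟨t, rfl⟩ := List.prefix_of_prefix_length_le
    ((List.prefix_append _ _).trans h) (List.prefix_append _ _) hle
  rw [List.append_assoc, List.prefix_append_right_inj] at h
  rcases eq_or_ne t [] with rfl | ht
  · simp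
  -- the marker `o` sits at position `N` of the marker word, but a shifted copy has `z` there
  have ht1 : 0 < t.length := List.length_pos_iff.mpr ht
  have htN : t.length ≤ N := by simp at hN; omega
  have := h.getElem (i := N) (by simp)
  rw [List.getElem_append_right (by simp), List.getElem_append_right htN,
    List.getElem_append_left (by simp; omega)] at this
  simp at this
  exact absurd this hoz

section Simple

variable {K : Type} [Field K] {n : ℕ}

theorem ggPath_append_mul_eePath_append {z o : Fin n} (hoz : o ≠ z) {N : ℕ}
    {p₀ p : List (Fin n)} (hle : p₀.length ≤ p.length) (hN : p.length ≤ N) :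
    ggPath K n (p₀ ++ (List.replicate N z ++ [o])) * eePath K n (p ++ (List.replicate N z ++ [o]))
      = if p = p₀ then 1 else 0 := by
  split_ifs with hp
  · rw [hp, ggPath_mul_eePath_self]
  rw [ggPath_mul_eePath, if_neg fun h => hp (eq_of_append_marker_prefix hoz hle hN h).symm,
    if_neg fun h => hp (List.append_cancel_right (h.eq_of_length (le_antisymm h.length_le
      (by simpa using hle))))]

theorem exists_mul_mul_eq_one_of_mem_span_eePath (hn : 2 ≤ n) {y : LRose K n}
    (hy : y ∈ Submodule.span K (Set.range (eePath K n))) (hy0 : y ≠ 0) :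
    ∃ a b : LRose K n, a * y * b = 1 := by
  obtain ⟨d, rfl⟩ := Finsupp.mem_span_range_iff_exists_finsupp.mp hy
  have hd : d.support.Nonempty := Finsupp.support_nonempty_iff.mpr (by rintro rfl; simp at hy0)
  obtain ⟨p₀, hp₀, hmin⟩ := d.support.exists_min_image List.length hd
  set σ := List.replicate (d.support.sup List.length) (⟨0, by omega⟩ : Fin n) ++ [⟨1, by omega⟩]
  have hoz : (⟨1, by omega⟩ : Fin n) ≠ ⟨0, by omega⟩ := by simp
  refine ⟨(d p₀)⁻¹ • ggPath K n (p₀ ++ σ), eePath K n σ, ?_⟩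
  have hterm : ∀ p ∈ d.support, ggPath K n (p₀ ++ σ) * (d p • eePath K n p) * eePath K n σ
      = if p = p₀ then d p₀ • 1 else 0 := fun p hp => by
    rw [mul_smul_comm, smul_mul_assoc, mul_assoc, ← eePath_append,
      ggPath_append_mul_eePath_append hoz (hmin p hp) (Finset.le_sup hp)]
    split_ifs with h <;> simp [h]
  rw [smul_mul_assoc, smul_mul_assoc, Finsupp.sum, Finset.mul_sum, Finset.sum_mul,
    Finset.sum_congr rfl hterm, Finset.sum_ite_eq', if_pos hp₀, smul_smul,
    inv_mul_cancel₀ (Finsupp.mem_support_iff.mp hp₀), one_smul]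

theorem monomial_mul_eePath_mem_span (p q μ : List (Fin n)) (h : q.length ≤ μ.length) :
    eePath K n p * ggPath K n q * eePath K n μ ∈ Submodule.span K (Set.range (eePath K n)) := by
  rw [mul_assoc, ggPath_mul_eePath]
  split_ifs with hqμ hμq
  · rw [← eePath_append]
    exact Submodule.subset_span ⟨_, rfl⟩
  · rw [(hμq.eq_of_length (le_antisymm hμq.length_le h)).symm] at hqμ
    exact absurd List.prefix_rfl hqμ
  · rw [mul_zero]
    exact zero_mem _

theorem exists_mul_eePath_ne_zero (k : ℕ) {x : LRose K n} (hx : x ≠ 0) :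
    ∃ μ : List (Fin n), μ.length = k ∧ x * eePath K n μ ≠ 0 := by
  induction k generalizing x with
  | zero => exact ⟨[], rfl, by simpa using hx⟩
  | succ k ih =>
    have : ∃ i, x * ee K n i ≠ 0 := by
      by_contra! h
      apply hx
      rw [← mul_one x, ← isCuntzFamily_ee_gg.sum_edge_mul_ghost, Finset.mul_sum]
      exact Finset.sum_eq_zero fun i _ => by rw [← mul_assoc, h i, zero_mul]
    obtain ⟨i, hi⟩ := this
    obtain ⟨μ, hμ, hne⟩ := ih hi
    exact ⟨i :: μ, by simp [hμ], by rwa [eePath_cons, ← mul_assoc]⟩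

/-- Multiplying on the right by a path longer than every ghost part leaves a combination of
paths, from which a ghost path ending in a marker word isolates one term. -/
theorem exists_mul_mul_eq_one (hn : 2 ≤ n) {x : LRose K n} (hx : x ≠ 0) :
    ∃ a b : LRose K n, a * x * b = 1 := by
  obtain ⟨c, hc⟩ := Finsupp.mem_span_range_iff_exists_finsupp.mp (mem_span_range_rMonomial x)
  obtain ⟨μ, hμ, hne⟩ := exists_mul_eePath_ne_zero (c.support.sup fun pq => pq.2.length) hx
  have hspan : x * eePath K n μ ∈ Submodule.span K (Set.range (eePath K n)) := by
    rw [← hc, Finsupp.sum, Finset.sum_mul]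
    refine Submodule.sum_mem _ fun pq hpq => ?_
    rw [smul_mul_assoc]
    exact Submodule.smul_mem _ _ (monomial_mul_eePath_mem_span _ _ _
      (hμ ▸ Finset.le_sup (f := fun pq : List (Fin n) × List (Fin n) => pq.2.length) hpq))
  obtain ⟨a, b, hab⟩ := exists_mul_mul_eq_one_of_mem_span_eePath hn hspan hne
  exact ⟨a, eePath K n μ * b, by rw [← hab]; simp only [mul_assoc]⟩

end Simple

theorem RingHom.injective_of_exists_mul_mul_eq_one {R : Type*} [Ring R]
    (h : ∀ x : R, x ≠ 0 → ∃ a b, a * x * b = 1) (f : R →+* R) : Function.Injective f := by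
  refine (injective_iff_map_eq_zero f).mpr fun x hfx => ?_
  by_contra hx
  obtain ⟨a, b, hab⟩ := h x hx
  have : (1 : R) = 0 := by rw [← f.map_one, ← hab, map_mul, map_mul, hfx, mul_zero, zero_mul]
  exact hx (by simpa using congrArg (x * ·) this)

theorem LRose.algHom_injective {K : Type} [Field K] {n : ℕ} (hn : 2 ≤ n)
    (f : LRose K n →ₐ[K] LRose K n) : Function.Injective f :=
  RingHom.injective_of_exists_mul_mul_eq_one (fun _ hx => exists_mul_mul_eq_one hn hx)
    f.toRingHom

section Endomorphisms

variable {K : Type} [Field K] {n : ℕ}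

theorem LRose.comp_eq_id_of_inv_eq_map {u u' w w' : LRose K n} (huu' : u * u' = 1)
    (hu'u : u' * u = 1) (hww' : w * w' = 1) {f g : LRose K n →ₐ[K] LRose K n}
    (hfe : ∀ i, f (ee K n i) = u * ee K n i) (hfg : ∀ i, f (gg K n i) = gg K n i * u')
    (hge : ∀ i, g (ee K n i) = w * ee K n i) (hgg : ∀ i, g (gg K n i) = gg K n i * w')
    (hw : u' = f w) : f.comp g = AlgHom.id K (LRose K n) := by
  have hw' : f w' = u := by
    calc f w' = u * (u' * f w') := by rw [← mul_assoc, huu', one_mul]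
      _ = u := by rw [hw, ← map_mul, hww', map_one, mul_one]
  refine LRose.algHom_ext (fun i => ?_) (fun i => ?_)
  · rw [AlgHom.comp_apply, hge, map_mul, hfe, ← hw, ← mul_assoc, hu'u, one_mul, AlgHom.id_apply]
  · rw [AlgHom.comp_apply, hgg, map_mul, hfg, hw', mul_assoc, hu'u, mul_one, AlgHom.id_apply]

theorem exists_eq_mul_ee_of_rGraded (φ : LRose K n →ₐ[K] LRose K n) (hφ : RGraded K n φ) :
    ∃ a a' : LRose K n,
      a ∈ rComponent K n 0 ∧ a' ∈ rComponent K n 0 ∧ a * a' = 1 ∧ a' * a = 1 ∧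
      (∀ i, φ (ee K n i) = a * ee K n i) ∧ (∀ i, φ (gg K n i) = gg K n i * a') := by
  have h := isCuntzFamily_ee_gg (K := K) (n := n)
  have hφc := h.map φ.toRingHom
  have h0 : (0 : ℤ) = 1 + -1 := by norm_num
  refine ⟨∑ k, φ (ee K n k) * gg K n k, ∑ k, ee K n k * φ (gg K n k), ?_, ?_,
    h.sum_mul_sum_eq_one hφc, hφc.sum_mul_sum_eq_one h,
    fun i => (h.sum_mul_ghost_mul_edge (fun k => φ (ee K n k)) i).symm,
    fun i => (h.ghost_mul_sum_edge_mul (fun k => φ (gg K n k)) i).symm⟩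
  · exact Submodule.sum_mem _ fun k _ =>
      h0 ▸ mul_mem_rComponent (hφ 1 _ (ee_mem_rComponent k)) (gg_mem_rComponent k)
  · exact Submodule.sum_mem _ fun k _ =>
      h0 ▸ mul_mem_rComponent (ee_mem_rComponent k) (hφ (-1) _ (gg_mem_rComponent k))

theorem rGraded_of_eq_mul_ee {φ : LRose K n →ₐ[K] LRose K n} {a a' : LRose K n}
    (ha : a ∈ rComponent K n 0) (ha' : a' ∈ rComponent K n 0)
    (hae : ∀ i, φ (ee K n i) = a * ee K n i) (hag : ∀ i, φ (gg K n i) = gg K n i * a') :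
    RGraded K n φ :=
  rGraded_of_map_mem_rComponent φ
    (fun i => by simpa [hae] using mul_mem_rComponent ha (ee_mem_rComponent i))
    (fun i => by simpa [hag] using mul_mem_rComponent (gg_mem_rComponent i) ha')

end Endomorphisms

/-- For a unit `u` of `L_K(R_n)`, `f_u` is an automorphism iff
`u^{-1} = f_u(w)` for some unit `w`; in this case `f_u^{-1} = f_w`.  Consequently the
graded automorphisms of `L_K(R_n)` are exactly the automorphisms `f_a` for units `a` of
the degree-zero component `L_K(R_n)_0`. -/
theorem stmt10 (K : Type) [Field K] (n : ℕ) (hn : 2 ≤ n)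
    (u u' : LRose K n) (huu' : u * u' = 1) (hu'u : u' * u = 1)
    (fu : LRose K n →ₐ[K] LRose K n)
    (hfue : ∀ i, fu (ee K n i) = u * ee K n i)
    (hfug : ∀ i, fu (gg K n i) = gg K n i * u') :
    (Function.Bijective ⇑fu ↔
      ∃ w w' : LRose K n, w * w' = 1 ∧ w' * w = 1 ∧ u' = fu w) ∧
    (∀ w w' : LRose K n, w * w' = 1 → w' * w = 1 → u' = fu w →
      ∀ fw : LRose K n →ₐ[K] LRose K n,
        (∀ i, fw (ee K n i) = w * ee K n i) → (∀ i, fw (gg K n i) = gg K n i * w') →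
        ∀ x, fu (fw x) = x ∧ fw (fu x) = x) ∧
    (∀ σ : LRose K n ≃ₐ[K] LRose K n,
      RGraded K n ⇑σ ↔
        ∃ a a' : LRose K n,
          a ∈ rComponent K n 0 ∧ a' ∈ rComponent K n 0 ∧
          a * a' = 1 ∧ a' * a = 1 ∧
          (∀ i, σ (ee K n i) = a * ee K n i) ∧ (∀ i, σ (gg K n i) = gg K n i * a')) := by
  have hinj := LRose.algHom_injective hn fu
  have hinv : ∀ w w' : LRose K n, w * w' = 1 → u' = fu w → ∀ fw : LRose K n →ₐ[K] LRose K n,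
      (∀ i, fw (ee K n i) = w * ee K n i) → (∀ i, fw (gg K n i) = gg K n i * w') →
        ∀ x, fu (fw x) = x := fun w w' hww' hw fw hfwe hfwg =>
    DFunLike.congr_fun (LRose.comp_eq_id_of_inv_eq_map huu' hu'u hww' hfue hfug hfwe hfwg hw)
  refine ⟨⟨fun hbij => ?_, fun ⟨w, w', hww', hw'w, hw⟩ => ?_⟩,
    fun w w' hww' _ hw fw hfwe hfwg x =>
      ⟨hinv w w' hww' hw fw hfwe hfwg x, hinj (hinv w w' hww' hw fw hfwe hfwg (fu x))⟩,
    fun σ => ⟨exists_eq_mul_ee_of_rGraded σ.toAlgHom,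
      fun ⟨_, _, ha, ha', _, _, hae, hag⟩ => rGraded_of_eq_mul_ee (φ := σ.toAlgHom) ha ha' hae hag⟩⟩
  · let e := AlgEquiv.ofBijective fu hbij
    exact ⟨e.symm u', e.symm u, by rw [← map_mul, hu'u, map_one],
      by rw [← map_mul, huu', map_one], (e.apply_symm_apply u').symm⟩
  · let fw := LRose.lift (K := K) (isCuntzFamily_ee_gg.conj hww' hw'w)
    exact ⟨hinj, fun x => ⟨fw x, hinv w w' hww' hw fw (LRose.lift_ee _) (LRose.lift_gg _) x⟩⟩
end

section
/- Let n ≥ 2 be an integer, K a field, and R_n the rose graph with n petals. The canonical group homomorphism T : U(L_K(R_n)) → Inn(L_K(R_n)), u ↦ τ_u, from the group of units to the group of inner automorphisms is surjective with kernel K* · 1_{L_K(R_n)}, the group of nonzero scalar multiples of the identity. Consequently, the center of the group U(L_K(R_n)) equals K* · 1_{L_K(R_n)}. -/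
/-!
Every element of `L_K(R_n)` is a `K`-combination of monomials `p q*` (`p`, `q` paths), and
`q* p` is `p'`, `q'*` or `0` according as `q` is a prefix of `p`, `p` is a prefix of `q`, or
neither. Conjugating by a path `λ = a^M b` with `a ≠ b` and `M` large therefore sends every
monomial to `0` or `1`, so `λ* z λ` is a scalar; for central `z` it equals `z λ* λ = z`.
Hence the centre of the algebra is `K`, which is the kernel of `u ↦ τ_u`.

A unit that is central in the unit group commutes with the units `1 + x`, `x` nilpotent, hence
with the square-zero monomials `p q*` (`p`, `q` incomparable). When `n ≥ 2` these generate
`e_i = Σ_m e_i e_m e_m*` and `e_i*`, so the unit is central in the algebra.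
-/

theorem List.eq_of_replicate_append_singleton_prefix {α : Type*} {a b : α} (hab : a ≠ b) :
    ∀ {s t : ℕ}, List.replicate s a ++ [b] <+: List.replicate t a ++ [b] → s = t
  | 0, 0, _ => rfl
  | 0, _ + 1, h => absurd (List.cons_prefix_cons.mp h).1 hab.symm
  | _ + 1, 0, h => absurd (List.cons_prefix_cons.mp h).1 hab
  | _ + 1, _ + 1, h =>
    congrArg (· + 1)
      (List.eq_of_replicate_append_singleton_prefix hab (List.cons_prefix_cons.mp h).2)

theorem Units.forall_inv_mul_mul_eq_iff {M : Type*} [Monoid M] (u : Mˣ) :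
    (∀ r : M, ↑u⁻¹ * r * ↑u = r) ↔ ∀ r : M, Commute (u : M) r :=
  forall_congr' fun r => by rw [mul_assoc, Units.inv_mul_eq_iff_eq_mul, eq_comm]; rfl

theorem Units.commute_of_mem_center_of_isNilpotent {A : Type*} [Ring A] {u : Aˣ}
    (hu : u ∈ Subgroup.center Aˣ) {x : A} (hx : IsNilpotent x) : Commute (u : A) x := by
  have h : Commute (u : A) (1 + x) :=
    congrArg Units.val (Subgroup.mem_center_iff.mp hu hx.isUnit_one_add.unit).symm
  simpa using h.sub_right (Commute.one_right _)

theorem Units.exists_ne_zero_algebraMap_eq_iff_mem_bot {K A : Type*} [Field K] [Ring A]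
    [Algebra K A] (u : Aˣ) :
    (∃ k : K, k ≠ 0 ∧ (u : A) = algebraMap K A k) ↔ (u : A) ∈ (⊥ : Subalgebra K A) := by
  refine ⟨fun ⟨k, _, hk⟩ => Algebra.mem_bot.mpr ⟨k, hk.symm⟩, fun hu => ?_⟩
  obtain ⟨k, hk⟩ := Algebra.mem_bot.mp hu
  by_cases hk0 : k = 0
  · have : Subsingleton A := subsingleton_of_zero_eq_one <| by
      rw [← u.mul_inv, ← hk, hk0, map_zero, zero_mul]
    exact ⟨1, one_ne_zero, Subsingleton.elim _ _⟩
  · exact ⟨k, hk0, hk.symm⟩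

namespace LRose

variable {K : Type} [Field K] {n : ℕ}

variable (K) in
noncomputable def path (p : List (Fin n)) : LRose K n := (p.map (ee K n)).prod

variable (K) in
noncomputable def ghostPath (q : List (Fin n)) : LRose K n := (q.reverse.map (gg K n)).prod

@[simp]
theorem path_nil : path K ([] : List (Fin n)) = 1 := rfl

@[simp]
theorem ghostPath_nil : ghostPath K ([] : List (Fin n)) = 1 := rfl

theorem path_cons (a : Fin n) (p : List (Fin n)) :
    path K (a :: p) = ee K n a * path K p := by
  simp [path]

theorem ghostPath_cons (a : Fin n) (q : List (Fin n)) :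
    ghostPath K (a :: q) = ghostPath K q * gg K n a := by
  simp [ghostPath]

theorem path_append (p r : List (Fin n)) : path K (p ++ r) = path K p * path K r := by
  simp [path]

theorem ghostPath_append (p r : List (Fin n)) :
    ghostPath K (p ++ r) = ghostPath K r * ghostPath K p := by
  simp [ghostPath]

theorem gg_mul_ee (i j : Fin n) : gg K n i * ee K n j = if i = j then 1 else 0 := by
  rw [gg, ee, ← map_mul]
  split_ifs with h
  · subst h
    rw [RingQuot.mkAlgHom_rel K (RoseRel.ghostEdgeSame i), map_one]
  · rw [RingQuot.mkAlgHom_rel K (RoseRel.ghostEdgeNe i j h), map_zero]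

theorem sum_ee_mul_gg : ∑ i : Fin n, ee K n i * gg K n i = 1 := by
  simpa only [map_sum, map_mul, map_one, ee, gg] using
    RingQuot.mkAlgHom_rel K (RoseRel.ck2 (K := K) (n := n))

theorem ghostPath_mul_path (q p : List (Fin n)) :
    ghostPath K q * path K p =
      if q <+: p then path K (p.drop q.length)
      else if p <+: q then ghostPath K (q.drop p.length) else 0 := by
  induction q generalizing p with
  | nil => simp
  | cons a q ih =>
    cases p with
    | nil => simp
    | cons b p =>
      rw [ghostPath_cons, path_cons, mul_assoc, ← mul_assoc (gg K n a), gg_mul_ee]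
      by_cases hab : a = b
      · subst hab
        simp [ih, List.cons_prefix_cons]
      · simp [hab, Ne.symm hab, List.cons_prefix_cons]

theorem ghostPath_mul_path_self (q : List (Fin n)) : ghostPath K q * path K q = 1 := by
  simp [ghostPath_mul_path]

theorem adjoin_ee_gg : Algebra.adjoin K (Set.range (ee K n) ∪ Set.range (gg K n)) = ⊤ := by
  rw [eq_top_iff]
  rintro x -
  obtain ⟨y, rfl⟩ := RingQuot.mkAlgHom_surjective K (RoseRel K n) x
  induction y using FreeAlgebra.induction with
  | grade0 k => rw [AlgHom.commutes]; exact Subalgebra.algebraMap_mem _ k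
  | grade1 x =>
    cases x with
    | e i => exact Algebra.subset_adjoin (.inl ⟨i, rfl⟩)
    | g i => exact Algebra.subset_adjoin (.inr ⟨i, rfl⟩)
  | mul a b ha hb => rw [map_mul]; exact mul_mem ha hb
  | add a b ha hb => rw [map_add]; exact add_mem ha hb

theorem commute_of_commute_ee_gg {z : LRose K n} (he : ∀ i, Commute z (ee K n i))
    (hg : ∀ i, Commute z (gg K n i)) (r : LRose K n) : Commute z r :=
  Algebra.commute_of_mem_adjoin_of_forall_mem_commute (adjoin_ee_gg (K := K) ▸ Algebra.mem_top)
    (by rintro _ (⟨i, rfl⟩ | ⟨i, rfl⟩) <;> simp only [he, hg])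

variable (K n) in
def monomials : Set (LRose K n) := {x | ∃ p q : List (Fin n), x = path K p * ghostPath K q}

theorem monomial_mul_monomial_mem (p q p' q' : List (Fin n)) :
    path K p * ghostPath K q * (path K p' * ghostPath K q') ∈ insert 0 (monomials K n) := by
  rw [mul_assoc, ← mul_assoc (ghostPath K q), ghostPath_mul_path]
  split_ifs
  · exact .inr ⟨p ++ p'.drop q.length, q', by rw [path_append, mul_assoc]⟩
  · exact .inr ⟨p, q' ++ q.drop p'.length, by rw [ghostPath_append]⟩
  · exact .inl (by simp)

theorem span_monomials : Submodule.span K (monomials K n) = ⊤ := by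
  have hcl : (Submonoid.closure (Set.range (ee K n) ∪ Set.range (gg K n)) : Set (LRose K n))
      ⊆ insert 0 (monomials K n) := by
    intro x hx
    induction hx using Submonoid.closure_induction with
    | mem x hx =>
      rcases hx with ⟨i, rfl⟩ | ⟨i, rfl⟩
      · exact .inr ⟨[i], [], by simp [path, ghostPath]⟩
      · exact .inr ⟨[], [i], by simp [path, ghostPath]⟩
    | one => exact .inr ⟨[], [], by simp⟩
    | mul x y _ _ hx hy =>
      rcases hx with rfl | ⟨p, q, rfl⟩
      · exact .inl (zero_mul y)
      rcases hy with rfl | ⟨p', q', rfl⟩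
      · exact .inl (mul_zero _)
      exact monomial_mul_monomial_mem p q p' q'
  rw [eq_top_iff, ← Submodule.span_insert_zero, ← Algebra.toSubmodule_eq_top.mpr adjoin_ee_gg,
    Algebra.adjoin_eq_span]
  exact Submodule.span_mono hcl

theorem path_mul_ghostPath_eq_mul (p q r : List (Fin n)) :
    path K p * ghostPath K r = path K p * ghostPath K q * (path K q * ghostPath K r) := by
  rw [mul_assoc, ← mul_assoc (ghostPath K q), ghostPath_mul_path_self, one_mul]

variable (n) in
def sepWord (a b : Fin n) (M : ℕ) : List (Fin n) := List.replicate M a ++ [b]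

theorem length_sepWord (a b : Fin n) (M : ℕ) : (sepWord n a b M).length = M + 1 := by
  simp [sepWord]

theorem drop_sepWord (a b : Fin n) {j M : ℕ} (hj : j ≤ M) :
    (sepWord n a b M).drop j = sepWord n a b (M - j) := by
  simp [sepWord, List.drop_append, List.drop_replicate, Nat.sub_eq_zero_of_le hj]

theorem ghostPath_sepWord_mul_path_sepWord_mem_bot {a b : Fin n} (hab : a ≠ b) (s t : ℕ) :
    ghostPath K (sepWord n a b s) * path K (sepWord n a b t)
      ∈ (⊥ : Subalgebra K (LRose K n)) := by
  rw [ghostPath_mul_path]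
  split_ifs with h₁ h₂
  · rw [List.eq_of_replicate_append_singleton_prefix hab h₁, List.drop_length, path_nil]
    exact one_mem _
  · rw [List.eq_of_replicate_append_singleton_prefix hab h₂, List.drop_length, ghostPath_nil]
    exact one_mem _
  · exact zero_mem _

theorem ghostPath_sepWord_mul_monomial_mul_path_sepWord_mem_bot {a b : Fin n} (hab : a ≠ b)
    {p q : List (Fin n)} {M : ℕ} (hp : p.length ≤ M) (hq : q.length ≤ M) :
    ghostPath K (sepWord n a b M) * (path K p * ghostPath K q) * path K (sepWord n a b M)
      ∈ (⊥ : Subalgebra K (LRose K n)) := by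
  have hassoc :
      ghostPath K (sepWord n a b M) * (path K p * ghostPath K q) * path K (sepWord n a b M) =
        ghostPath K (sepWord n a b M) * path K p * (ghostPath K q * path K (sepWord n a b M)) := by
    simp only [mul_assoc]
  have hlong {r : List (Fin n)} (hr : r.length ≤ M) : ¬ sepWord n a b M <+: r := fun h => by
    have := h.length_le
    rw [length_sepWord] at this
    omega
  rw [hassoc, ghostPath_mul_path, ghostPath_mul_path, if_neg (hlong hp), if_neg (hlong hq),
    drop_sepWord a b hp, drop_sepWord a b hq]
  split_ifs <;> simp [ghostPath_sepWord_mul_path_sepWord_mem_bot hab]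

theorem eventually_ghostPath_sepWord_mul_mul_path_sepWord_mem_bot {a b : Fin n} (hab : a ≠ b)
    (x : LRose K n) :
    ∀ᶠ M in Filter.atTop, ghostPath K (sepWord n a b M) * x * path K (sepWord n a b M)
      ∈ (⊥ : Subalgebra K (LRose K n)) := by
  have hx : x ∈ Submodule.span K (monomials K n) := by
    rw [span_monomials]; exact Submodule.mem_top
  induction hx using Submodule.span_induction with
  | mem x hx =>
    obtain ⟨p, q, rfl⟩ := hx
    filter_upwards [Filter.eventually_ge_atTop (max p.length q.length)] with M hM
    exact ghostPath_sepWord_mul_monomial_mul_path_sepWord_mem_bot hab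
      (le_of_max_le_left hM) (le_of_max_le_right hM)
  | zero => simp
  | add x y _ _ hx hy =>
    filter_upwards [hx, hy] with M hxM hyM
    rw [mul_add, add_mul]
    exact add_mem hxM hyM
  | smul k x _ hx =>
    filter_upwards [hx] with M hM
    rw [mul_smul_comm, smul_mul_assoc]
    exact Subalgebra.smul_mem _ hM k

theorem center_eq_bot (hn : 2 ≤ n) : Subalgebra.center K (LRose K n) = ⊥ := by
  have : Nontrivial (Fin n) := Fin.nontrivial_iff_two_le.mpr hn
  obtain ⟨a, b, hab⟩ := exists_pair_ne (Fin n)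
  refine eq_bot_iff.mpr fun z hz => ?_
  obtain ⟨M, hM⟩ :=
    (eventually_ghostPath_sepWord_mul_mul_path_sepWord_mem_bot (K := K) hab z).exists
  rwa [Subalgebra.mem_center_iff.mp hz, mul_assoc, ghostPath_mul_path_self, mul_one] at hM

theorem isNilpotent_path_cons_mul_ghostPath_cons {a b : Fin n} (hab : a ≠ b)
    (p q : List (Fin n)) :
    IsNilpotent (path K (a :: p) * ghostPath K (b :: q)) := by
  refine ⟨2, ?_⟩
  rw [sq, mul_assoc, ← mul_assoc (ghostPath K _), ghostPath_mul_path,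
    if_neg fun h => hab (List.cons_prefix_cons.mp h).1.symm,
    if_neg fun h => hab (List.cons_prefix_cons.mp h).1, zero_mul, mul_zero]

theorem ee_eq_sum (i : Fin n) : ee K n i = ∑ m, path K [i, m] * ghostPath K [m] := by
  rw [← mul_one (ee K n i), ← sum_ee_mul_gg, Finset.mul_sum]
  simp [path, ghostPath, mul_assoc]

theorem gg_eq_sum (i : Fin n) : gg K n i = ∑ m, path K [m] * ghostPath K [i, m] := by
  rw [← one_mul (gg K n i), ← sum_ee_mul_gg, Finset.sum_mul]
  simp [path, ghostPath, mul_assoc]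

theorem commute_of_forall_isNilpotent_commute (hn : 2 ≤ n) {z : LRose K n}
    (hz : ∀ x, IsNilpotent x → Commute z x) (r : LRose K n) : Commute z r := by
  have : Nontrivial (Fin n) := Fin.nontrivial_iff_two_le.mpr hn
  have hinc {a b : Fin n} (hab : a ≠ b) (p q : List (Fin n)) :
      Commute z (path K (a :: p) * ghostPath K (b :: q)) :=
    hz _ (isNilpotent_path_cons_mul_ghostPath_cons hab p q)
  refine commute_of_commute_ee_gg (fun i => ?_) (fun i => ?_) r <;>
    obtain ⟨j, hj⟩ := exists_ne i
  · rw [ee_eq_sum]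
    refine Commute.sum_right _ _ _ fun m _ => ?_
    rcases eq_or_ne m i with rfl | hm
    · rw [path_mul_ghostPath_eq_mul _ [j]]
      exact (hinc hj.symm _ _).mul_right (hinc hj _ _)
    · exact hinc hm.symm _ _
  · rw [gg_eq_sum]
    refine Commute.sum_right _ _ _ fun m _ => ?_
    rcases eq_or_ne m i with rfl | hm
    · rw [path_mul_ghostPath_eq_mul _ [j]]
      exact (hinc hj.symm _ _).mul_right (hinc hj _ _)
    · exact hinc hm _ _

end LRose

/-- The canonical homomorphism `T : U(L_K(R_n)) → Inn(L_K(R_n))`,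
`u ↦ τ_u` (`τ_u : r ↦ u^{-1} r u`), is surjective (by the very definition of the group
of inner automorphisms) and its kernel is `K^* · 1`: `τ_u = id` iff `u` is a nonzero
scalar multiple of the identity.  Consequently the center of the group `U(L_K(R_n))`
equals `K^* · 1`. -/
theorem stmt11 (K : Type) [Field K] (n : ℕ) (hn : 2 ≤ n) :
    (∀ u : (LRose K n)ˣ,
      (∀ r : LRose K n, (↑u⁻¹ : LRose K n) * r * (u : LRose K n) = r) ↔
        ∃ k : K, k ≠ 0 ∧ (u : LRose K n) = algebraMap K (LRose K n) k) ∧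
    (∀ u : (LRose K n)ˣ,
      u ∈ Subgroup.center (LRose K n)ˣ ↔
        ∃ k : K, k ≠ 0 ∧ (u : LRose K n) = algebraMap K (LRose K n) k) := by
  have hscalar (u : (LRose K n)ˣ) :
      (∀ r, Commute (u : LRose K n) r) ↔
        ∃ k : K, k ≠ 0 ∧ (u : LRose K n) = algebraMap K (LRose K n) k := by
    rw [Units.exists_ne_zero_algebraMap_eq_iff_mem_bot, ← LRose.center_eq_bot hn,
      Subalgebra.mem_center_iff]
    exact forall_congr' fun r => eq_comm
  refine ⟨fun u => (Units.forall_inv_mul_mul_eq_iff u).trans (hscalar u), fun u => ?_⟩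
  rw [← hscalar]
  refine ⟨fun hu => LRose.commute_of_forall_isNilpotent_commute hn
    fun x hx => Units.commute_of_mem_center_of_isNilpotent hu hx, fun hu => ?_⟩
  exact Subgroup.mem_center_iff.mpr fun g => Units.ext (hu g).eq.symm
end
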